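/- Let λ* > 0 and let (c*, Q*) be a spectral pair at λ* satisfying c* ≥ λ*(θmax + θmin). Then there exists δ > 0 such that every solution (c, μ) of the travelling-wave equation with 0 ≤ c ≤ c*, whose density ν is bounded on ℝ and satisfies inf_{ξ ∈ ℝ} ν(ξ) > 0, in fact satisfies inf_{ξ ∈ ℝ} ν(ξ) ≥ δ. -/

import Mathlib

/-!
Multiplying the travelling-wave equation by `Q*` and integrating in `θ` (the Neumann conditions
let the `θ`-diffusion fall on `Q*`, whose eigen-equation absorbs it) shows that the moments
`P = ∫ Q* μ` and `J = ∫ θ Q* μ` satisfy `J' = v - c P` and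
`v' = λ*² J - λ* c* P + r ν P`. As `θmin P ≤ J ≤ θmax P` and `c* ≥ λ* (θmax + θmin)`, this gives
`v' ≤ -λ*² θmin P / 2` wherever `P` lies below a threshold `p₀ ∼ λ*² θmin min Q* / r`, so with
`inf ν > 0` the function `v` decreases at a uniform rate on `{P < p₀}`. Hence `{P < p₀}` contains
no right half-line, and at its exits `J ≥ θmin p₀`. A comparison argument on `J`, run to the
right when `v(ξ)` is small and to the left when `v(ξ)` is large, shows that `J` cannot fall from
such an exit to an arbitrarily small value `J(ξ)`; this bounds `P(ξ)`, hence `ν(ξ)`, from below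
by a constant independent of `c` and `μ`.
-/

open Set Filter MeasureTheory

/-- A spectral pair `(c, Q)` at `lam` for parameters `thmin thmax alpha r`:
`Q` is positive, normalized, twice continuously differentiable, solves the eigenproblem
on `(thmin, thmax)` and satisfies Neumann boundary conditions. -/
def IsSpectralPair (thmin thmax alpha r lam c : ℝ) (Q : ℝ → ℝ) : Prop :=
  ContDiff ℝ 2 Q ∧
  (∀ θ ∈ Set.Icc thmin thmax, 0 < Q θ) ∧
  (∫ θ in Set.Ioo thmin thmax, Q θ) = 1 ∧
  (∀ θ ∈ Set.Ioo thmin thmax,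
    alpha * iteratedDeriv 2 Q θ + (-(lam * c) + θ * lam ^ 2 + r) * Q θ = 0) ∧
  deriv Q thmin = 0 ∧ deriv Q thmax = 0

/-- A solution of the travelling-wave equation with speed `c`: a nonnegative function,
twice continuously differentiable with bounded derivatives up to order two, solving the
equation on `ℝ × (thmin, thmax)` with Neumann boundary conditions in the trait variable. -/
def IsTravellingWave (thmin thmax alpha r c : ℝ) (μ : ℝ → ℝ → ℝ) : Prop :=
  (∀ ξ : ℝ, ∀ θ ∈ Set.Icc thmin thmax, 0 ≤ μ ξ θ) ∧
  ContDiff ℝ 2 (Function.uncurry μ) ∧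
  (∃ M : ℝ, ∀ i : ℕ, i ≤ 2 → ∀ p : ℝ × ℝ,
    ‖iteratedFDeriv ℝ i (Function.uncurry μ) p‖ ≤ M) ∧
  (∀ ξ : ℝ, ∀ θ ∈ Set.Ioo thmin thmax,
    -(c * deriv (fun x => μ x θ) ξ) - θ * iteratedDeriv 2 (fun x => μ x θ) ξ
      - alpha * iteratedDeriv 2 (fun t => μ ξ t) θ
      = r * μ ξ θ * (1 - ∫ t in Set.Ioo thmin thmax, μ ξ t)) ∧
  (∀ ξ : ℝ, deriv (fun t => μ ξ t) thmin = 0 ∧ deriv (fun t => μ ξ t) thmax = 0)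

theorem sub_le_mul_sub_of_hasDerivAt_le {f f' : ℝ → ℝ} (hf : ∀ t, HasDerivAt f (f' t) t)
    {x y C : ℝ} (hxy : x ≤ y) (hC : ∀ t ∈ Ioo x y, f' t ≤ C) : f y - f x ≤ C * (y - x) :=
  (convex_Icc x y).image_sub_le_mul_sub_of_deriv_le
    (fun t _ => (hf t).continuousAt.continuousWithinAt)
    (fun t _ => (hf t).differentiableAt.differentiableWithinAt)
    (fun t ht => by rw [interior_Icc] at ht; rw [(hf t).deriv]; exact hC t ht)
    x (left_mem_Icc.2 hxy) y (right_mem_Icc.2 hxy) hxy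

theorem mul_sub_le_sub_of_le_hasDerivAt {f f' : ℝ → ℝ} (hf : ∀ t, HasDerivAt f (f' t) t)
    {x y C : ℝ} (hxy : x ≤ y) (hC : ∀ t ∈ Ioo x y, C ≤ f' t) : C * (y - x) ≤ f y - f x :=
  (convex_Icc x y).mul_sub_le_image_sub_of_le_deriv
    (fun t _ => (hf t).continuousAt.continuousWithinAt)
    (fun t _ => (hf t).differentiableAt.differentiableWithinAt)
    (fun t ht => by rw [interior_Icc] at ht; rw [(hf t).deriv]; exact hC t ht)
    x (left_mem_Icc.2 hxy) y (right_mem_Icc.2 hxy) hxy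

theorem le_of_hasDerivAt_neg_of_eq {f f' : ℝ → ℝ} (hf : ∀ t, HasDerivAt f (f' t) t)
    {x y L : ℝ} (hx : f x ≤ L) (hL : ∀ t ∈ Ico x y, f t = L → f' t < 0) :
    ∀ t ∈ Icc x y, f t ≤ L :=
  image_le_of_deriv_right_lt_deriv_boundary' (B := fun _ => L) (B' := 0)
    (fun t _ => (hf t).continuousAt.continuousWithinAt) (fun t _ => (hf t).hasDerivWithinAt) hx
    continuousOn_const (fun _ _ => hasDerivWithinAt_const _ _ _) hL

theorem le_of_hasDerivAt_pos_of_eq {f f' : ℝ → ℝ} (hf : ∀ t, HasDerivAt f (f' t) t)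
    {x y L : ℝ} (hy : f y ≤ L) (hL : ∀ t ∈ Ioc x y, f t = L → 0 < f' t) :
    ∀ t ∈ Icc x y, f t ≤ L := by
  have hneg : ∀ u, HasDerivAt (fun u => f (-u)) (-f' (-u)) u := fun u =>
    ((hf (-u)).comp u (hasDerivAt_neg' u)).congr_deriv (by ring)
  intro t ht
  simpa using le_of_hasDerivAt_neg_of_eq hneg (x := -y) (y := -x) (by simpa using hy)
    (fun u hu hfu => neg_neg_of_pos (hL (-u) ⟨lt_neg.1 hu.2, neg_le.1 hu.1⟩ hfu))
    (-t) ⟨neg_le_neg ht.2, neg_le_neg ht.1⟩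

theorem exists_first_le_of_le {f : ℝ → ℝ} (hf : Continuous f) {x y L : ℝ} (hxy : x ≤ y)
    (hy : L ≤ f y) : ∃ r ∈ Icc x y, L ≤ f r ∧ ∀ t ∈ Ico x r, f t < L := by
  obtain ⟨r, ⟨hr, hLr⟩, hmin⟩ := (isCompact_Icc.inter_right
    (isClosed_le continuous_const hf)).exists_isMinOn ⟨y, ⟨hxy, le_rfl⟩, hy⟩ continuousOn_id
  exact ⟨r, hr, hLr, fun t ht => not_le.1 fun hLt =>
    ht.2.not_ge (hmin ⟨⟨ht.1, ht.2.le.trans hr.2⟩, hLt⟩)⟩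

theorem exists_last_le_of_le {f : ℝ → ℝ} (hf : Continuous f) {x y L : ℝ} (hxy : x ≤ y)
    (hx : L ≤ f x) : ∃ l ∈ Icc x y, L ≤ f l ∧ ∀ t ∈ Ioc l y, f t < L := by
  obtain ⟨l, ⟨hl, hLl⟩, hmax⟩ := (isCompact_Icc.inter_right
    (isClosed_le continuous_const hf)).exists_isMaxOn ⟨x, ⟨le_rfl, hxy⟩, hx⟩ continuousOn_id
  exact ⟨l, hl, hLl, fun t ht => not_le.1 fun hLt =>
    ht.1.not_ge (hmax ⟨⟨hl.1.trans ht.1.le, ht.2⟩, hLt⟩)⟩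

/-- The system satisfied by the moments `P = ∫ Q* μ`, `J = ∫ θ Q* μ` of a travelling wave with
`v = J' + c P`, `a = θmin`, `b = θmax` (see `IsTravellingWave.isMomentSystem`); `v` decays at
rate `β` on `{P < p₀}`. -/
structure IsMomentSystem (P J v v' : ℝ → ℝ) (a b c p₀ β : ℝ) : Prop where
  a_pos : 0 < a
  a_le_b : a ≤ b
  c_nonneg : 0 ≤ c
  β_pos : 0 < β
  continuous_P : Continuous P
  P_pos : ∀ t, 0 < P t
  mul_P_le_J : ∀ t, a * P t ≤ J t
  J_le_mul_P : ∀ t, J t ≤ b * P t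
  hasDerivAt_J : ∀ t, HasDerivAt J (v t - c * P t) t
  hasDerivAt_v : ∀ t, HasDerivAt v (v' t) t
  deriv_v_le : ∀ t, P t < p₀ → v' t ≤ -β

namespace IsMomentSystem

variable {P J v v' : ℝ → ℝ} {a b c p₀ β : ℝ}

theorem J_pos (S : IsMomentSystem P J v v' a b c p₀ β) (t : ℝ) : 0 < J t :=
  (mul_pos S.a_pos (S.P_pos t)).trans_le (S.mul_P_le_J t)

theorem v_sub_le (S : IsMomentSystem P J v v' a b c p₀ β) {x y : ℝ} (hxy : x ≤ y)
    (hlow : ∀ t ∈ Ioo x y, P t < p₀) : v y - v x ≤ -β * (y - x) :=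
  sub_le_mul_sub_of_hasDerivAt_le S.hasDerivAt_v hxy fun t ht => S.deriv_v_le t (hlow t ht)

theorem v_le (S : IsMomentSystem P J v v' a b c p₀ β) {x y : ℝ} (hxy : x ≤ y)
    (hlow : ∀ t ∈ Ioo x y, P t < p₀) : v y ≤ v x := by
  nlinarith [S.v_sub_le hxy hlow, S.β_pos]

/-- On a right half-line inside `{P < p₀}`, `v` and hence `J' ≤ v` would tend to `-∞`,
contradicting `J > 0`. -/
theorem not_forall_lt (S : IsMomentSystem P J v v' a b c p₀ β) (x : ℝ) :
    ¬ ∀ t, x ≤ t → P t < p₀ := by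
  intro hlow
  obtain ⟨d, hd0, hd⟩ : ∃ d, 0 ≤ d ∧ β * d = |v x| + 1 :=
    ⟨(|v x| + 1) / β, by have := S.β_pos; positivity, by field_simp [S.β_pos.ne']⟩
  have hv : ∀ t, x + d ≤ t → v t ≤ -1 := fun t ht => by
    nlinarith [S.v_sub_le (le_add_of_nonneg_right hd0 |>.trans ht) fun u hu => hlow u hu.1.le,
      le_abs_self (v x), S.β_pos]
  have hJ := sub_le_mul_sub_of_hasDerivAt_le S.hasDerivAt_J (x := x + d) (y := x + d + J (x + d))
    (C := -1) (le_add_of_nonneg_right (S.J_pos _).le) fun t ht => by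
      nlinarith [hv t ht.1.le, mul_nonneg S.c_nonneg (S.P_pos t).le]
  linarith [S.J_pos (x + d + J (x + d))]

theorem exists_exit_right (S : IsMomentSystem P J v v' a b c p₀ β) (x : ℝ) :
    ∃ r, x ≤ r ∧ p₀ ≤ P r ∧ ∀ t ∈ Ico x r, P t < p₀ := by
  obtain ⟨y, hxy, hy⟩ : ∃ y, x ≤ y ∧ p₀ ≤ P y := by
    simpa only [not_forall, not_lt, exists_prop] using S.not_forall_lt x
  obtain ⟨r, hr, hpr, hlow⟩ := exists_first_le_of_le S.continuous_P hxy hy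
  exact ⟨r, hr.1, hpr, hlow⟩

theorem mul_le_J_of_v_nonpos (S : IsMomentSystem P J v v' a b c p₀ β) {x : ℝ} (hv : v x ≤ 0) :
    a * p₀ ≤ J x := by
  obtain ⟨r, hxr, hpr, hlow⟩ := S.exists_exit_right x
  have hJ := sub_le_mul_sub_of_hasDerivAt_le S.hasDerivAt_J hxr (C := 0) fun t ht => by
    have := S.v_le ht.1.le fun u hu => hlow u ⟨hu.1.le, hu.2.trans ht.2⟩
    nlinarith [mul_nonneg S.c_nonneg (S.P_pos t).le]
  nlinarith [S.mul_P_le_J r, S.a_pos]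

/-- While `a v x < 2 c J x`, the level `2 b J x / a` is a barrier for `J` to the right. -/
theorem sq_mul_le_mul_J_of_v_lt (S : IsMomentSystem P J v v' a b c p₀ β) {x : ℝ}
    (hv : a * v x < 2 * c * J x) : a ^ 2 * p₀ ≤ 2 * b * J x := by
  obtain ⟨r, hxr, hpr, hlow⟩ := S.exists_exit_right x
  have ha := S.a_pos
  have hb := ha.trans_le S.a_le_b
  obtain ⟨L, hL⟩ : ∃ L, a * L = 2 * b * J x := ⟨2 * b * J x / a, by field_simp⟩
  have hJL : J x ≤ L := le_of_mul_le_mul_left (by nlinarith [S.J_pos x, S.a_le_b]) ha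
  have hbarrier := le_of_hasDerivAt_neg_of_eq S.hasDerivAt_J hJL fun t ht hJt => by
    have hvt := S.v_le ht.1 fun u hu => hlow u ⟨hu.1.le, hu.2.trans ht.2⟩
    have hcJ : c * (a * L) ≤ a * (b * (c * P t)) := by
      rw [← hJt]
      nlinarith [mul_le_mul_of_nonneg_left (S.J_le_mul_P t) (mul_nonneg S.c_nonneg ha.le)]
    have : 2 * c * J x ≤ a * (c * P t) := le_of_mul_le_mul_left (by
      rw [show b * (2 * c * J x) = c * (a * L) by rw [hL]; ring]; linarith) hb
    nlinarith
  nlinarith [S.mul_P_le_J r, hbarrier r ⟨hxr, le_rfl⟩]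

/-- Going left from `x`, the level `J x` is a barrier for `J`, below which
`a c P ≤ c J x ≤ a v x / 2`, so that `J' = v - c P ≥ v x / 2`. -/
theorem J_le_sub_of_lt_v (S : IsMomentSystem P J v v' a b c p₀ β) {x y : ℝ} (hyx : y ≤ x)
    (hv0 : 0 < v x) (hv : 2 * c * J x ≤ a * v x) (hlow : ∀ t ∈ Ioc y x, P t < p₀) :
    J y ≤ J x - v x / 2 * (x - y) := by
  have ha := S.a_pos
  have hderiv : ∀ t ∈ Ioc y x, J t ≤ J x → v x / 2 ≤ v t - c * P t := fun t ht hJt => by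
    have hvt := S.v_le ht.2 fun u hu => hlow u ⟨ht.1.trans hu.1, hu.2.le⟩
    have : a * (c * P t) ≤ c * J x := by nlinarith [S.mul_P_le_J t, S.c_nonneg]
    nlinarith
  have htrap := le_of_hasDerivAt_pos_of_eq S.hasDerivAt_J le_rfl fun t ht hJt =>
    (half_pos hv0).trans_le (hderiv t ht hJt.le)
  have := mul_sub_le_sub_of_le_hasDerivAt S.hasDerivAt_J hyx fun t ht =>
    hderiv t ⟨ht.1, ht.2.le⟩ (htrap t ⟨ht.1.le, ht.2.le⟩)
  linarith

theorem mul_le_J_of_lt_v (S : IsMomentSystem P J v v' a b c p₀ β) {x : ℝ}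
    (hv0 : 0 < v x) (hv : 2 * c * J x ≤ a * v x) : a * p₀ ≤ J x := by
  by_cases hexit : ∃ z ≤ x, p₀ ≤ P z
  · obtain ⟨z, hzx, hz⟩ := hexit
    obtain ⟨l, hl, hpl, hlow⟩ := exists_last_le_of_le S.continuous_P hzx hz
    have := S.J_le_sub_of_lt_v hl.2 hv0 hv hlow
    nlinarith [S.mul_P_le_J l, S.a_pos, mul_nonneg hv0.le (sub_nonneg.2 hl.2)]
  · push Not at hexit
    have := S.J_le_sub_of_lt_v (y := x - 2 * J x / v x)
      (sub_le_self _ (div_nonneg (by linarith [S.J_pos x]) hv0.le)) hv0 hv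
      fun t ht => hexit t ht.2
    have : v x / 2 * (x - (x - 2 * J x / v x)) = J x := by field_simp; ring
    linarith [S.J_pos (x - 2 * J x / v x)]

theorem le_P (S : IsMomentSystem P J v v' a b c p₀ β) (x : ℝ) :
    a ^ 2 * p₀ / (2 * b ^ 2) ≤ P x := by
  have ha := S.a_pos
  have hb := ha.trans_le S.a_le_b
  have hJ : a ^ 2 * p₀ ≤ 2 * b * J x := by
    rcases lt_or_ge (a * v x) (2 * c * J x) with hv | hv
    · exact S.sq_mul_le_mul_J_of_v_lt hv
    have h : a * p₀ ≤ J x := by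
      rcases le_or_gt (v x) 0 with hv0 | hv0
      · exact S.mul_le_J_of_v_nonpos hv0
      · exact S.mul_le_J_of_lt_v hv0 hv
    nlinarith [S.J_pos x, S.a_le_b]
  rw [div_le_iff₀ (by positivity)]
  nlinarith [S.J_le_mul_P x]

end IsMomentSystem

theorem Continuous.integrableOn_Ioo {f : ℝ → ℝ} (hf : Continuous f) {a b : ℝ} :
    IntegrableOn f (Ioo a b) :=
  hf.integrableOn_Icc.mono_set Ioo_subset_Icc_self

theorem ContDiff.hasDerivAt_deriv {f : ℝ → ℝ} (hf : ContDiff ℝ 2 f) (t : ℝ) :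
    HasDerivAt (deriv f) (iteratedDeriv 2 f t) t := by
  have h : ContDiff ℝ 1 (deriv f) := (contDiff_succ_iff_deriv (n := 1).1 hf).2.2
  rw [iteratedDeriv_succ, iteratedDeriv_one]
  exact (h.differentiable one_ne_zero t).hasDerivAt

theorem setIntegral_mul_iteratedDeriv_two_comm {a b : ℝ} (hab : a ≤ b) {f g : ℝ → ℝ}
    (hf : ContDiff ℝ 2 f) (hg : ContDiff ℝ 2 g) (hfa : deriv f a = 0) (hfb : deriv f b = 0)
    (hga : deriv g a = 0) (hgb : deriv g b = 0) :
    ∫ θ in Ioo a b, g θ * iteratedDeriv 2 f θ = ∫ θ in Ioo a b, f θ * iteratedDeriv 2 g θ := by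
  have hW : ∀ t, HasDerivAt (fun t => deriv f t * g t - f t * deriv g t)
      (g t * iteratedDeriv 2 f t - f t * iteratedDeriv 2 g t) t := fun t =>
    (((hf.hasDerivAt_deriv t).mul (hg.differentiable two_ne_zero t).hasDerivAt).sub
      ((hf.differentiable two_ne_zero t).hasDerivAt.mul (hg.hasDerivAt_deriv t))).congr_deriv
      (by ring)
  have hfg : Continuous fun t => g t * iteratedDeriv 2 f t :=
    hg.continuous.mul (hf.continuous_iteratedDeriv 2 le_rfl)
  have hgf : Continuous fun t => f t * iteratedDeriv 2 g t :=
    hf.continuous.mul (hg.continuous_iteratedDeriv 2 le_rfl)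
  have hFTC := intervalIntegral.integral_eq_sub_of_hasDerivAt (fun t _ => hW t)
    ((hfg.sub hgf).intervalIntegrable a b)
  rw [intervalIntegral.integral_of_le hab, integral_Ioc_eq_integral_Ioo,
    integral_sub hfg.integrableOn_Ioo hgf.integrableOn_Ioo] at hFTC
  simp only [hfa, hfb, hga, hgb, zero_mul, mul_zero, sub_self] at hFTC
  linarith

noncomputable def partialFst (f : ℝ → ℝ → ℝ) : ℝ → ℝ → ℝ :=
  Function.curry fun p => fderiv ℝ (Function.uncurry f) p (1, 0)

theorem hasDerivAt_partialFst {f : ℝ → ℝ → ℝ} (hf : Differentiable ℝ (Function.uncurry f))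
    (ξ θ : ℝ) : HasDerivAt (fun x => f x θ) (partialFst f ξ θ) ξ := by
  have h := (hf (ξ, θ)).hasFDerivAt.comp_hasDerivAt ξ
    ((hasDerivAt_id ξ).prodMk (hasDerivAt_const ξ θ))
  exact h

theorem ContDiff.uncurry_partialFst {f : ℝ → ℝ → ℝ} {n : WithTop ℕ∞}
    (hf : ContDiff ℝ (n + 1) (Function.uncurry f)) :
    ContDiff ℝ n (Function.uncurry (partialFst f)) :=
  (hf.fderiv_right le_rfl).clm_apply contDiff_const

theorem iteratedDeriv_two_eq_partialFst_partialFst {f : ℝ → ℝ → ℝ}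
    (hf : ContDiff ℝ 2 (Function.uncurry f)) (ξ θ : ℝ) :
    iteratedDeriv 2 (fun x => f x θ) ξ = partialFst (partialFst f) ξ θ := by
  have h1 : deriv (fun x => f x θ) = fun x => partialFst f x θ :=
    funext fun x => (hasDerivAt_partialFst (hf.differentiable two_ne_zero) x θ).deriv
  rw [iteratedDeriv_succ, iteratedDeriv_one, h1]
  exact (hasDerivAt_partialFst ((hf.uncurry_partialFst (n := 1)).differentiable one_ne_zero)
    ξ θ).deriv

theorem abs_partialFst_le (f : ℝ → ℝ → ℝ) (ξ θ : ℝ) :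
    |partialFst f ξ θ| ≤ ‖iteratedFDeriv ℝ 1 (Function.uncurry f) (ξ, θ)‖ := by
  rw [norm_iteratedFDeriv_one, ← Real.norm_eq_abs]
  change ‖fderiv ℝ (Function.uncurry f) (ξ, θ) (1, 0)‖ ≤ _
  simpa [Prod.norm_def] using (fderiv ℝ (Function.uncurry f) (ξ, θ)).le_opNorm (1, 0)

theorem abs_partialFst_partialFst_le {f : ℝ → ℝ → ℝ} (hf : ContDiff ℝ 2 (Function.uncurry f))
    (ξ θ : ℝ) :
    |partialFst (partialFst f) ξ θ| ≤ ‖iteratedFDeriv ℝ 2 (Function.uncurry f) (ξ, θ)‖ := by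
  have hd : Differentiable ℝ (fderiv ℝ (Function.uncurry f)) :=
    (hf.fderiv_right (m := 1) le_rfl).differentiable one_ne_zero
  have heq : partialFst (partialFst f) ξ θ =
      fderiv ℝ (fderiv ℝ (Function.uncurry f)) (ξ, θ) (1, 0) (1, 0) := by
    simp [partialFst, fderiv_clm_apply (hd _) (differentiableAt_const _)]
  rw [heq, ← Real.norm_eq_abs, (norm_iteratedFDeriv_fderiv (n := 1)).symm.trans
    (norm_iteratedFDeriv_one _)]
  simpa [Prod.norm_def] using
    (fderiv ℝ (fderiv ℝ (Function.uncurry f)) (ξ, θ)).le_opNorm₂ (1, 0) (1, 0)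

noncomputable def moment (a b : ℝ) (w : ℝ → ℝ) (f : ℝ → ℝ → ℝ) (ξ : ℝ) : ℝ :=
  ∫ θ in Ioo a b, w θ * f ξ θ

theorem moment_const_mul {a b : ℝ} (k : ℝ) (w : ℝ → ℝ) (f : ℝ → ℝ → ℝ) (ξ : ℝ) :
    moment a b (fun θ => k * w θ) f ξ = k * moment a b w f ξ := by
  simp only [moment, mul_assoc, integral_const_mul]

theorem moment_mono {a b ξ : ℝ} {w₁ w₂ : ℝ → ℝ} {f : ℝ → ℝ → ℝ} (hw₁ : Continuous w₁)
    (hw₂ : Continuous w₂) (hf : Continuous (f ξ)) (hw : ∀ θ ∈ Ioo a b, w₁ θ ≤ w₂ θ)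
    (hf0 : ∀ θ ∈ Ioo a b, 0 ≤ f ξ θ) : moment a b w₁ f ξ ≤ moment a b w₂ f ξ :=
  setIntegral_mono_on (hw₁.mul hf).integrableOn_Ioo (hw₂.mul hf).integrableOn_Ioo
    measurableSet_Ioo fun θ hθ => mul_le_mul_of_nonneg_right (hw θ hθ) (hf0 θ hθ)

theorem moment_const {a b : ℝ} (k : ℝ) (f : ℝ → ℝ → ℝ) (ξ : ℝ) :
    moment a b (fun _ => k) f ξ = k * ∫ θ in Ioo a b, f ξ θ :=
  integral_const_mul k _

theorem hasDerivAt_moment {a b M : ℝ} {w : ℝ → ℝ} {f f' : ℝ → ℝ → ℝ} (hw : Continuous w)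
    (hf : Continuous (Function.uncurry f)) (hf' : Continuous (Function.uncurry f'))
    (hderiv : ∀ ξ θ, HasDerivAt (fun x => f x θ) (f' ξ θ) ξ) (hbound : ∀ ξ θ, |f' ξ θ| ≤ M)
    (ξ : ℝ) : HasDerivAt (moment a b w f) (moment a b w f' ξ) ξ :=
  (hasDerivAt_integral_of_dominated_loc_of_deriv_le (bound := fun θ => |w θ| * M) univ_mem
    (Eventually.of_forall fun x => (hw.mul (hf.uncurry_left x)).aestronglyMeasurable)
    (hw.mul (hf.uncurry_left ξ)).integrableOn_Ioo
    (hw.mul (hf'.uncurry_left ξ)).aestronglyMeasurable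
    (ae_of_all _ fun θ x _ => by
      rw [Real.norm_eq_abs, abs_mul]
      exact mul_le_mul_of_nonneg_left (hbound x θ) (abs_nonneg _))
    (hw.abs.mul continuous_const).integrableOn_Ioo
    (ae_of_all _ fun θ x _ => (hderiv x θ).const_mul (w θ))).2

theorem hasDerivAt_moment_partialFst {a b M : ℝ} {w : ℝ → ℝ} {f : ℝ → ℝ → ℝ}
    (hw : Continuous w) (hf : ContDiff ℝ 2 (Function.uncurry f))
    (hM : ∀ i ≤ 2, ∀ p, ‖iteratedFDeriv ℝ i (Function.uncurry f) p‖ ≤ M) (ξ : ℝ) :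
    HasDerivAt (moment a b w f) (moment a b w (partialFst f) ξ) ξ ∧
      HasDerivAt (moment a b w (partialFst f)) (moment a b w (partialFst (partialFst f)) ξ) ξ := by
  have h1 : ContDiff ℝ 1 (Function.uncurry (partialFst f)) := hf.uncurry_partialFst
  exact ⟨hasDerivAt_moment hw hf.continuous h1.continuous
      (hasDerivAt_partialFst (hf.differentiable two_ne_zero))
      (fun ξ θ => (abs_partialFst_le f ξ θ).trans (hM 1 one_le_two _)) ξ,
    hasDerivAt_moment hw h1.continuous (h1.uncurry_partialFst (n := 0)).continuous
      (hasDerivAt_partialFst (h1.differentiable one_ne_zero))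
      (fun ξ θ => (abs_partialFst_partialFst_le hf ξ θ).trans (hM 2 le_rfl _)) ξ⟩

theorem IsSpectralPair.mul_integral_mul_iteratedDeriv_two {thmin thmax alpha r lam c : ℝ}
    {Q g : ℝ → ℝ} (hQ : IsSpectralPair thmin thmax alpha r lam c Q) (hle : thmin ≤ thmax)
    (hg : ContDiff ℝ 2 g) (hga : deriv g thmin = 0) (hgb : deriv g thmax = 0) :
    alpha * ∫ θ in Ioo thmin thmax, Q θ * iteratedDeriv 2 g θ =
      (lam * c - r) * (∫ θ in Ioo thmin thmax, Q θ * g θ)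
        - lam ^ 2 * ∫ θ in Ioo thmin thmax, θ * Q θ * g θ := by
  obtain ⟨hQc, -, -, hQeq, hQa, hQb⟩ := hQ
  have hQg : Continuous fun θ => Q θ * g θ := hQc.continuous.mul hg.continuous
  have hθQg : Continuous fun θ => θ * Q θ * g θ :=
    (continuous_id.mul hQc.continuous).mul hg.continuous
  rw [setIntegral_mul_iteratedDeriv_two_comm hle hg hQc hga hgb hQa hQb, ← integral_const_mul,
    ← integral_const_mul, ← integral_const_mul, ← integral_sub (hQg.integrableOn_Ioo.const_mul _)
      (hθQg.integrableOn_Ioo.const_mul _)]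
  exact setIntegral_congr_fun measurableSet_Ioo fun θ hθ => by
    linear_combination g θ * hQeq θ hθ

theorem IsTravellingWave.moment_identity {thmin thmax alpha r c lam cstar : ℝ}
    {μ : ℝ → ℝ → ℝ} {Q : ℝ → ℝ} (hμ : IsTravellingWave thmin thmax alpha r c μ)
    (hQ : IsSpectralPair thmin thmax alpha r lam cstar Q) (hle : thmin ≤ thmax) (ξ : ℝ) :
    c * moment thmin thmax Q (partialFst μ) ξ
        + moment thmin thmax (fun θ => θ * Q θ) (partialFst (partialFst μ)) ξ =
      lam ^ 2 * moment thmin thmax (fun θ => θ * Q θ) μ ξ - lam * cstar * moment thmin thmax Q μ ξ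
        + r * (∫ t in Ioo thmin thmax, μ ξ t) * moment thmin thmax Q μ ξ := by
  obtain ⟨-, hC2, -, hpde, hbc⟩ := hμ
  have hsec : ContDiff ℝ 2 (fun t => μ ξ t) := hC2.comp (contDiff_const.prodMk contDiff_id)
  have hQ' := hQ.mul_integral_mul_iteratedDeriv_two hle hsec (hbc ξ).1 (hbc ξ).2
  have hC1 : ContDiff ℝ 1 (Function.uncurry (partialFst μ)) := hC2.uncurry_partialFst
  have hQc := hQ.1.continuous
  have h1 : Continuous fun θ => Q θ * partialFst μ ξ θ :=
    hQc.mul (hC1.continuous.uncurry_left ξ)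
  have h2 : Continuous fun θ => θ * Q θ * partialFst (partialFst μ) ξ θ :=
    (continuous_id.mul hQc).mul ((hC1.uncurry_partialFst (n := 0)).continuous.uncurry_left ξ)
  have h3 : Continuous fun θ => Q θ * iteratedDeriv 2 (fun t => μ ξ t) θ :=
    hQc.mul (hsec.continuous_iteratedDeriv 2 le_rfl)
  have hint : ∫ θ in Ioo thmin thmax, r * (1 - ∫ t in Ioo thmin thmax, μ ξ t) * (Q θ * μ ξ θ) =
      ∫ θ in Ioo thmin thmax, (-c * (Q θ * partialFst μ ξ θ)
        - θ * Q θ * partialFst (partialFst μ) ξ θ - alpha * (Q θ * iteratedDeriv 2 (μ ξ ·) θ)) :=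
    setIntegral_congr_fun measurableSet_Ioo fun θ hθ => by
      have h := hpde ξ θ hθ
      rw [(hasDerivAt_partialFst (hC2.differentiable two_ne_zero) ξ θ).deriv,
        iteratedDeriv_two_eq_partialFst_partialFst hC2] at h
      linear_combination -(Q θ) * h
  rw [integral_const_mul, integral_sub (f := fun θ => -c * (Q θ * partialFst μ ξ θ)
      - θ * Q θ * partialFst (partialFst μ) ξ θ) ((h1.integrableOn_Ioo.const_mul _).sub
      h2.integrableOn_Ioo) (h3.integrableOn_Ioo.const_mul _), integral_sub
      (h1.integrableOn_Ioo.const_mul _) h2.integrableOn_Ioo, integral_const_mul,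
      integral_const_mul] at hint
  simp only [moment]
  linear_combination hint - hQ'

theorem IsTravellingWave.isMomentSystem {thmin thmax alpha r c lam cstar m qmin : ℝ}
    {μ : ℝ → ℝ → ℝ} {Q : ℝ → ℝ} (hth : 0 < thmin) (hthth : thmin < thmax) (hr : 0 < r)
    (hlam : 0 < lam) (hQ : IsSpectralPair thmin thmax alpha r lam cstar Q)
    (hcstar : lam * (thmax + thmin) ≤ cstar) (hqmin : 0 < qmin)
    (hQmin : ∀ θ ∈ Icc thmin thmax, qmin ≤ Q θ) (hc : 0 ≤ c)
    (hμ : IsTravellingWave thmin thmax alpha r c μ) (hm : 0 < m)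
    (hν : ∀ ξ, m ≤ ∫ t in Ioo thmin thmax, μ ξ t) :
    IsMomentSystem (moment thmin thmax Q μ) (moment thmin thmax (fun θ => θ * Q θ) μ)
      (fun ξ => moment thmin thmax (fun θ => θ * Q θ) (partialFst μ) ξ
        + c * moment thmin thmax Q μ ξ)
      (fun ξ => moment thmin thmax (fun θ => θ * Q θ) (partialFst (partialFst μ)) ξ
        + c * moment thmin thmax Q (partialFst μ) ξ)
      thmin thmax c (lam ^ 2 * thmin * qmin / (2 * r)) (lam ^ 2 * thmin * qmin * m / 2) := by
  have hid := hμ.moment_identity hQ hthth.le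
  obtain ⟨hμ0, hC2, ⟨M, hM⟩, -, -⟩ := hμ
  have hQc := hQ.1.continuous
  have hθQc : Continuous fun θ => θ * Q θ := continuous_id.mul hQc
  have hQ0 : ∀ θ ∈ Ioo thmin thmax, 0 ≤ Q θ := fun θ hθ =>
    hqmin.le.trans (hQmin θ (Ioo_subset_Icc_self hθ))
  have hmono := fun ξ {w₁ w₂ : ℝ → ℝ} (hw₁ : Continuous w₁) (hw₂ : Continuous w₂)
      (hw : ∀ θ ∈ Ioo thmin thmax, w₁ θ ≤ w₂ θ) =>
    moment_mono hw₁ hw₂ (hC2.continuous.uncurry_left ξ) hw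
      fun θ hθ => hμ0 ξ θ (Ioo_subset_Icc_self hθ)
  have hPν : ∀ ξ, qmin * (∫ t in Ioo thmin thmax, μ ξ t) ≤ moment thmin thmax Q μ ξ :=
    fun ξ => moment_const (b := thmax) qmin μ ξ ▸
      hmono ξ continuous_const hQc fun θ hθ => hQmin θ (Ioo_subset_Icc_self hθ)
  have hPm : ∀ ξ, qmin * m ≤ moment thmin thmax Q μ ξ := fun ξ =>
    (mul_le_mul_of_nonneg_left (hν ξ) hqmin.le).trans (hPν ξ)
  have hPJ : ∀ ξ, thmin * moment thmin thmax Q μ ξ ≤ moment thmin thmax (fun θ => θ * Q θ) μ ξ :=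
    fun ξ => moment_const_mul thmin Q μ ξ ▸ hmono ξ (continuous_const.mul hQc) hθQc
      fun θ hθ => mul_le_mul_of_nonneg_right hθ.1.le (hQ0 θ hθ)
  have hJP : ∀ ξ, moment thmin thmax (fun θ => θ * Q θ) μ ξ ≤ thmax * moment thmin thmax Q μ ξ :=
    fun ξ => moment_const_mul thmax Q μ ξ ▸ hmono ξ hθQc (continuous_const.mul hQc)
      fun θ hθ => mul_le_mul_of_nonneg_right hθ.2.le (hQ0 θ hθ)
  have hdP := fun ξ => hasDerivAt_moment_partialFst (a := thmin) (b := thmax) hQc hC2 hM ξ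
  have hdJ := fun ξ => hasDerivAt_moment_partialFst (a := thmin) (b := thmax) hθQc hC2 hM ξ
  refine ⟨hth, hthth.le, hc, by positivity,
    continuous_iff_continuousAt.2 fun ξ => (hdP ξ).1.continuousAt,
    fun ξ => (mul_pos hqmin hm).trans_le (hPm ξ), hPJ, hJP,
    fun ξ => (hdJ ξ).1.congr_deriv (by ring),
    fun ξ => (hdJ ξ).2.add ((hdP ξ).1.const_mul c), fun ξ hlow => ?_⟩
  -- `v' = λ² J - λ c* P + r ν P ≤ -λ² θmin P + r ν P`, and `r ν ≤ r P / qmin < λ² θmin / 2`.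
  have hP0 : 0 < moment thmin thmax Q μ ξ := (mul_pos hqmin hm).trans_le (hPm ξ)
  have hJbound := mul_le_mul_of_nonneg_left (hJP ξ) (sq_nonneg lam)
  have hcstarP := mul_le_mul_of_nonneg_right (mul_le_mul_of_nonneg_left hcstar hlam.le) hP0.le
  have hrP : 2 * r * moment thmin thmax Q μ ξ < lam ^ 2 * thmin * qmin := by
    rwa [lt_div_iff₀ (by positivity), mul_comm] at hlow
  have hνP : r * (∫ t in Ioo thmin thmax, μ ξ t) * moment thmin thmax Q μ ξ ≤
      lam ^ 2 * thmin * moment thmin thmax Q μ ξ / 2 := by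
    refine le_of_mul_le_mul_left ?_ hqmin
    nlinarith [mul_le_mul_of_nonneg_right (hPν ξ) (mul_nonneg hr.le hP0.le)]
  have hmP := mul_le_mul_of_nonneg_left (hPm ξ) (by positivity : (0 : ℝ) ≤ lam ^ 2 * thmin)
  nlinarith [hid ξ]

theorem statement16_general (thmin thmax alpha r : ℝ)
    (hth : 0 < thmin) (hthth : thmin < thmax) (hr : 0 < r)
    (lamstar cstar : ℝ) (hlam : 0 < lamstar) (Qstar : ℝ → ℝ)
    (hQ : IsSpectralPair thmin thmax alpha r lamstar cstar Qstar)
    (hcstar : lamstar * (thmax + thmin) ≤ cstar) :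
    ∃ δ > (0 : ℝ), ∀ (c : ℝ) (μ : ℝ → ℝ → ℝ), 0 ≤ c → c ≤ cstar →
      IsTravellingWave thmin thmax alpha r c μ →
      (∃ M : ℝ, ∀ ξ : ℝ, |∫ t in Set.Ioo thmin thmax, μ ξ t| ≤ M) →
      (∃ m > (0 : ℝ), ∀ ξ : ℝ, m ≤ ∫ t in Set.Ioo thmin thmax, μ ξ t) →
      ∀ ξ : ℝ, δ ≤ ∫ t in Set.Ioo thmin thmax, μ ξ t := by
  have hQc := hQ.1.continuous
  obtain ⟨θ₁, hθ₁, hmin⟩ :=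
    isCompact_Icc.exists_isMinOn (nonempty_Icc.2 hthth.le) hQc.continuousOn
  obtain ⟨θ₂, hθ₂, hmax⟩ :=
    isCompact_Icc.exists_isMaxOn (nonempty_Icc.2 hthth.le) hQc.continuousOn
  have hq₁ := hQ.2.1 θ₁ hθ₁
  have hq₂ := hQ.2.1 θ₂ hθ₂
  have hthmax := hth.trans hthth
  refine ⟨thmin ^ 2 * (lamstar ^ 2 * thmin * Qstar θ₁ / (2 * r)) / (2 * thmax ^ 2) / Qstar θ₂,
    by positivity, ?_⟩
  rintro c μ hc - hμ - ⟨m, hm, hν⟩ ξ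
  have S := hμ.isMomentSystem hth hthth hr hlam hQ hcstar hq₁ (fun θ hθ => hmin hθ) hc hm hν
  have hP : moment thmin thmax Qstar μ ξ ≤ Qstar θ₂ * ∫ t in Ioo thmin thmax, μ ξ t :=
    moment_const (a := thmin) _ μ ξ ▸ moment_mono hQc continuous_const
      (hμ.2.1.continuous.uncurry_left ξ) (fun θ hθ => hmax (Ioo_subset_Icc_self hθ))
      fun θ hθ => hμ.1 ξ θ (Ioo_subset_Icc_self hθ)
  rw [div_le_iff₀ hq₂]
  linarith [S.le_P ξ]

theorem statement16 (thmin thmax alpha r : ℝ)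
    (hth : 0 < thmin) (hthth : thmin < thmax) (halpha : 0 < alpha) (hr : 0 < r)
    (lamstar cstar : ℝ) (hlam : 0 < lamstar) (Qstar : ℝ → ℝ)
    (hQ : IsSpectralPair thmin thmax alpha r lamstar cstar Qstar)
    (hcstar : lamstar * (thmax + thmin) ≤ cstar) :
    ∃ δ > (0 : ℝ), ∀ (c : ℝ) (μ : ℝ → ℝ → ℝ), 0 ≤ c → c ≤ cstar →
      IsTravellingWave thmin thmax alpha r c μ →
      (∃ M : ℝ, ∀ ξ : ℝ, |∫ t in Set.Ioo thmin thmax, μ ξ t| ≤ M) →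
      (∃ m > (0 : ℝ), ∀ ξ : ℝ, m ≤ ∫ t in Set.Ioo thmin thmax, μ ξ t) →
      ∀ ξ : ℝ, δ ≤ ∫ t in Set.Ioo thmin thmax, μ ξ t :=
  statement16_general thmin thmax alpha r hth hthth hr lamstar cstar hlam Qstar hQ hcstar
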